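/- arXiv:2409.17092 — 6 statements merged into one kernel-verified Lean document; each statement's English description precedes it below -/
import Mathlib

section
/- Let q ∈ ℤ^K with Σ_i q_i = 0, and suppose ‖q‖₁ ≤ (2^P − 2)/(2^N − 1) for integers P ≥ 2, N ≥ 1. Then for every x ∈ ℤ^K with each x_i ∈ [μ, ν] where ν − μ = 2^N − 1, the dot product xᵀq satisfies |xᵀq| ≤ 2^{P−1} − 1, i.e., it fits in a signed P-bit sign-magnitude accumulator without overflow. -/
/-- If q ∈ ℤ^K is zero-sum with ‖q‖₁ ≤ (2^P − 2)/(2^N − 1) (P ≥ 2, N ≥ 1),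
then for any integer activations x with entries in an interval [μ, ν] of width 2^N − 1,
|xᵀq| ≤ 2^{P−1} − 1 (no overflow in a signed P-bit sign-magnitude accumulator). -/
theorem stmt1 (K : ℕ) (q : Fin K → ℤ) (P N : ℕ) (hP : 2 ≤ P) (hN : 1 ≤ N)
    (hsum : ∑ i, q i = 0)
    (hnorm : ((∑ i, |q i| : ℤ) : ℝ) ≤ ((2 : ℝ) ^ P - 2) / ((2 : ℝ) ^ N - 1)) :
    ∀ (μ ν : ℤ), ν - μ = 2 ^ N - 1 →
      ∀ x : Fin K → ℤ, (∀ i, x i ∈ Set.Icc μ ν) →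
        |∑ i, x i * q i| ≤ 2 ^ (P - 1) - 1 := by
  intro μ ν hw x hx
  set S : ℤ := ∑ i, |q i| with hS
  have hMposR : (0:ℝ) < (2:ℝ) ^ N - 1 := by
    have : (2:ℝ) ^ 1 ≤ (2:ℝ) ^ N := pow_le_pow_right₀ (by norm_num) hN
    simp at this; linarith
  have hMS : ((2:ℤ) ^ N - 1) * S ≤ 2 ^ P - 2 := by
    have h2 : (S : ℝ) * ((2:ℝ) ^ N - 1) ≤ (2:ℝ) ^ P - 2 := (le_div_iff₀ hMposR).mp hnorm
    have h3 : ((((2:ℤ) ^ N - 1) * S : ℤ) : ℝ) ≤ ((((2:ℤ) ^ P - 2) : ℤ) : ℝ) := by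
      push_cast
      linarith
    exact_mod_cast h3
  have h0 : ∑ i, (2 * x i - (μ + ν)) * q i = 2 * ∑ i, x i * q i := by
    simp [sub_mul, Finset.sum_sub_distrib, ← Finset.mul_sum, hsum, mul_assoc]
  have key : |2 * ∑ i, x i * q i| ≤ ((2:ℤ) ^ N - 1) * S := by
    rw [← h0]
    calc |∑ i, (2 * x i - (μ + ν)) * q i| ≤ ∑ i, |(2 * x i - (μ + ν)) * q i| :=
          Finset.abs_sum_le_sum_abs _ _
      _ ≤ ∑ i, ((2:ℤ) ^ N - 1) * |q i| := by
          apply Finset.sum_le_sum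
          intro i _
          rw [abs_mul]
          apply mul_le_mul_of_nonneg_right _ (abs_nonneg _)
          have h1 := (hx i).1
          have h2 := (hx i).2
          rw [abs_le]
          constructor <;> linarith
      _ = ((2:ℤ) ^ N - 1) * S := by rw [hS, Finset.mul_sum]
  have hpow : (2:ℤ) ^ P = 2 * 2 ^ (P - 1) := by
    conv_lhs => rw [show P = (P - 1) + 1 by omega]
    ring
  rw [abs_mul, abs_two] at key
  linarith
end

section
/- Let w ∈ ℝ^K and Z > 0, and consider the Euclidean projection problem min_v ½‖v − w‖₂² subject to ‖v‖₁ ≤ Z, with ‖w‖₁ > Z. Let μ be the entries of w sorted by magnitude in descending order, let v* be the unique minimizer, let ρ be the number of nonzero entries of v*, and set λ = (1/ρ)(Σ_{i=1}^{ρ} μ_i − Z). Then v* is given coordinate-wise by v*_i = sign(w_i)·max(|w_i| − λ, 0) (soft-thresholding), and ‖v*‖₁ = Z. -/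
open Finset

/-- sign x * |x| = x for Real.sign -/
lemma real_sign_mul_abs (x : ℝ) : Real.sign x * |x| = x := by
  rcases lt_trichotomy x 0 with h | h | h
  · rw [Real.sign_of_neg h, abs_of_neg h]; ring
  · simp [h]
  · rw [Real.sign_of_pos h, abs_of_pos h]; ring

lemma real_abs_sign {x : ℝ} (h : x ≠ 0) : |Real.sign x| = 1 := by
  rcases Real.sign_apply_eq_of_ne_zero x h with hs | hs <;> rw [hs] <;> norm_num

lemma real_sign_sq {x : ℝ} (h : x ≠ 0) : Real.sign x * Real.sign x = 1 := by
  rcases Real.sign_apply_eq_of_ne_zero x h with hs | hs <;> rw [hs] <;> norm_num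

/-- A downward-closed finset of `Fin K` is an initial segment. -/
lemma lowerset_eq {K : ℕ} (B : Finset (Fin K))
    (h : ∀ i j : Fin K, i ≤ j → j ∈ B → i ∈ B) :
    B = univ.filter (fun i : Fin K => (i : ℕ) < B.card) := by
  ext i
  simp only [mem_filter, mem_univ, true_and]
  constructor
  · intro hi
    by_contra hlt
    push_neg at hlt
    have hsub : Finset.Iic i ⊆ B := fun j hj => h j i (by simpa using hj) hi
    have := Finset.card_le_card hsub
    rw [Fin.card_Iic] at this
    omega
  · intro hi
    by_contra hiB
    have hsub : B ⊆ Finset.Iio i := by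
      intro j hj
      simp only [Finset.mem_Iio]
      by_contra hji
      push_neg at hji
      exact hiB (h i j hji hj)
    have := Finset.card_le_card hsub
    rw [Fin.card_Iio] at this
    omega

/-- Duchi et al.: Let vstar be the Euclidean projection of w onto the
ℓ₁ ball of radius Z (with ‖w‖₁ > Z > 0), μs the magnitudes of w sorted in descending
order, ρ the number of nonzero entries of vstar, and λ = (Σ_{i<ρ} μs_i − Z)/ρ. Then
vstar is obtained by soft-thresholding w at λ, and ‖vstar‖₁ = Z. -/
theorem stmt5 (K : ℕ) (w vstar μs : Fin K → ℝ) (Z : ℝ) (hZ : 0 < Z)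
    (hw : Z < ∑ i, |w i|)
    (hperm : ∃ σ : Equiv.Perm (Fin K), ∀ i, μs i = |w (σ i)|)
    (hanti : Antitone μs)
    (hfeas : ∑ i, |vstar i| ≤ Z)
    (hmin : ∀ v : Fin K → ℝ, ∑ i, |v i| ≤ Z →
      ∑ i, (vstar i - w i) ^ 2 ≤ ∑ i, (v i - w i) ^ 2)
    (huniq : ∀ v : Fin K → ℝ, ∑ i, |v i| ≤ Z →
      (∀ v' : Fin K → ℝ, ∑ i, |v' i| ≤ Z →
        ∑ i, (v i - w i) ^ 2 ≤ ∑ i, (v' i - w i) ^ 2) → v = vstar) :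
    (∀ i, vstar i =
      Real.sign (w i) *
        max (|w i| -
          ((∑ i ∈ Finset.univ.filter
              (fun i : Fin K =>
                (i : ℕ) < (Finset.univ.filter (fun j : Fin K => vstar j ≠ 0)).card),
              μs i) - Z) /
            (Finset.univ.filter (fun j : Fin K => vstar j ≠ 0)).card) 0) ∧
    ∑ i, |vstar i| = Z := by
  classical
  obtain ⟨σ, hσ⟩ := hperm
  -- the soft-threshold ℓ₁-norm function
  set g : ℝ → ℝ := fun l => ∑ i, max (|w i| - l) 0 with hg
  have hgcont : Continuous g :=
    continuous_finset_sum _ fun i _ =>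
      ((continuous_const.sub continuous_id).max continuous_const)
  set B := ∑ i, |w i| with hB
  have hgB : g B = 0 := by
    apply Finset.sum_eq_zero
    intro i _
    have h1 : |w i| ≤ B :=
      Finset.single_le_sum (fun j _ => abs_nonneg (w j)) (mem_univ i)
    exact max_eq_right (by linarith)
  have hg0 : g 0 = B := by
    apply Finset.sum_congr rfl
    intro i _
    simpa using max_eq_left (by simpa using abs_nonneg (w i))
  have h0B : (0 : ℝ) ≤ B := le_of_lt (hZ.trans hw)
  have hZmem : Z ∈ Set.Icc (g B) (g 0) := by
    rw [hgB, hg0]; exact ⟨hZ.le, hw.le⟩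
  obtain ⟨lam, _, hlam⟩ := intermediate_value_Icc' h0B hgcont.continuousOn hZmem
  -- lam > 0
  have hlampos : 0 < lam := by
    by_contra h
    push_neg at h
    have hge : B ≤ g lam := by
      apply Finset.sum_le_sum
      intro i _
      have := abs_nonneg (w i)
      calc |w i| ≤ |w i| - lam := by linarith
        _ ≤ max (|w i| - lam) 0 := le_max_left _ _
    rw [hlam] at hge; linarith
  -- soft-threshold vector
  set S : Fin K → ℝ := fun i => Real.sign (w i) * max (|w i| - lam) 0 with hSdef
  have habsS : ∀ i, |S i| = max (|w i| - lam) 0 := by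
    intro i
    by_cases h : w i = 0
    · rw [hSdef]
      simp only [h, Real.sign_zero, zero_mul, abs_zero]
      rw [zero_sub]
      exact (max_eq_right (neg_nonpos.mpr hlampos.le)).symm
    · rw [hSdef]
      simp only
      rw [abs_mul, real_abs_sign h, one_mul,
        abs_of_nonneg (le_max_right _ _)]
  have hSl1 : ∑ i, |S i| = Z := by
    rw [Finset.sum_congr rfl fun i _ => habsS i]; exact hlam
  -- explicit form on the active set
  have hSexp : ∀ i, lam < |w i| → S i = w i - Real.sign (w i) * lam := by
    intro i h
    rw [hSdef]; simp only
    rw [max_eq_left (by linarith)]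
    linear_combination real_sign_mul_abs (w i)
  -- |S i - w i| ≤ lam
  have hsub : ∀ i, |S i - w i| ≤ lam := by
    intro i
    by_cases h : |w i| ≤ lam
    · have hS0 : S i = 0 := by
        rw [hSdef]; simp only
        rw [max_eq_right (by linarith)]; ring
      rw [hS0]; rw [abs_sub_comm]; simpa using h
    · push_neg at h
      have hwne : w i ≠ 0 := fun h0 => by simp [h0] at h; linarith
      have hd : S i - w i = -(Real.sign (w i) * lam) := by
        rw [hSexp i h]; ring
      rw [hd, abs_neg, abs_mul, real_abs_sign hwne, one_mul,
        abs_of_pos hlampos]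
  -- S i * (S i - w i) = -lam * |S i|
  have hdot : ∀ i, S i * (S i - w i) = -lam * |S i| := by
    intro i
    by_cases h : |w i| ≤ lam
    · have hS0 : S i = 0 := by
        rw [hSdef]; simp only
        rw [max_eq_right (by linarith)]; ring
      rw [hS0]; simp
    · push_neg at h
      have hwne : w i ≠ 0 := fun h0 => by simp [h0] at h; linarith
      have hs := real_sign_mul_abs (w i)
      have hs2 := real_sign_sq hwne
      have hsw : Real.sign (w i) * w i = |w i| := by
        linear_combination (-Real.sign (w i)) * hs + |w i| * hs2
      rw [habsS i, max_eq_left (by linarith), hSexp i h]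
      linear_combination (-lam) * hsw + lam ^ 2 * hs2
  have hdotsum : ∑ i, S i * (S i - w i) = -(lam * Z) := by
    rw [Finset.sum_congr rfl fun i _ => hdot i, ← Finset.mul_sum, hSl1]; ring
  -- minimality of S
  have hminS : ∀ v : Fin K → ℝ, ∑ i, |v i| ≤ Z →
      ∑ i, (S i - w i) ^ 2 ≤ ∑ i, (v i - w i) ^ 2 := by
    intro v hv
    have hcross : 0 ≤ ∑ i, (v i - S i) * (S i - w i) := by
      have h1 : -(lam * Z) ≤ ∑ i, v i * (S i - w i) := by
        have hterm : ∀ i ∈ univ, -(|v i| * lam) ≤ v i * (S i - w i) := by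
          intro i _
          have h2 : |v i * (S i - w i)| ≤ |v i| * lam := by
            rw [abs_mul]
            exact mul_le_mul_of_nonneg_left (hsub i) (abs_nonneg _)
          have h3 := neg_abs_le (v i * (S i - w i))
          linarith
        have h4 : ∑ i, -(|v i| * lam) ≤ ∑ i, v i * (S i - w i) :=
          Finset.sum_le_sum hterm
        have h5 : ∑ i, -(|v i| * lam) = -((∑ i, |v i|) * lam) := by
          rw [Finset.sum_neg_distrib, Finset.sum_mul]
        have h6 : (∑ i, |v i|) * lam ≤ Z * lam :=
          mul_le_mul_of_nonneg_right hv hlampos.le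
        rw [h5] at h4
        nlinarith
      have hsplit : ∑ i, (v i - S i) * (S i - w i)
          = ∑ i, v i * (S i - w i) - ∑ i, S i * (S i - w i) := by
        rw [← Finset.sum_sub_distrib]
        exact Finset.sum_congr rfl fun i _ => by ring
      rw [hsplit, hdotsum]
      linarith
    have hexp : ∑ i, (v i - w i) ^ 2
        = ∑ i, (S i - w i) ^ 2 + ∑ i, (v i - S i) ^ 2
          + 2 * ∑ i, (v i - S i) * (S i - w i) := by
      rw [Finset.mul_sum, ← Finset.sum_add_distrib, ← Finset.sum_add_distrib]
      exact Finset.sum_congr rfl fun i _ => by ring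
    have hsq : 0 ≤ ∑ i, (v i - S i) ^ 2 :=
      Finset.sum_nonneg fun i _ => sq_nonneg _
    linarith
  -- S is the unique minimizer
  have hveq : S = vstar := huniq S (le_of_eq hSl1) hminS
  subst hveq
  -- identify the active set
  have hρset : univ.filter (fun j : Fin K => S j ≠ 0)
      = univ.filter (fun j => lam < |w j|) := by
    ext j
    simp only [mem_filter, mem_univ, true_and]
    constructor
    · intro h
      by_contra hle
      push_neg at hle
      have : |S j| = 0 := by rw [habsS j, max_eq_right (by linarith)]
      exact h (abs_eq_zero.mp this)
    · intro h hS0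
      have : |S j| = 0 := by rw [hS0]; simp
      rw [habsS j, max_eq_left (by linarith)] at this
      linarith
  set ρ := (univ.filter (fun j : Fin K => S j ≠ 0)).card with hρdef
  have hρ : ρ = (univ.filter (fun j : Fin K => lam < |w j|)).card := by
    rw [hρdef, hρset]
  have hρpos : 0 < ρ := by
    have hex : ∃ i, S i ≠ 0 := by
      by_contra h
      push_neg at h
      have : ∑ i, |S i| = 0 := Finset.sum_eq_zero fun i _ => by rw [h i]; simp
      rw [hSl1] at this; linarith
    obtain ⟨i, hi⟩ := hex
    exact Finset.card_pos.mpr ⟨i, by simp [hi]⟩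
  -- ∑ over active set of (|w i| - lam) = Z
  have hZeq : ∑ i ∈ univ.filter (fun j : Fin K => lam < |w j|), (|w i| - lam) = Z := by
    rw [Finset.sum_filter, ← hlam]
    apply Finset.sum_congr rfl
    intro i _
    by_cases h : lam < |w i|
    · rw [if_pos h, max_eq_left (by linarith)]
    · push_neg at h
      rw [if_neg (not_lt.mpr h), max_eq_right (by linarith)]
  have hsplit2 : ∑ i ∈ univ.filter (fun j : Fin K => lam < |w j|), |w i|
      - (ρ : ℝ) * lam = Z := by
    rw [← hZeq, Finset.sum_sub_distrib, Finset.sum_const, nsmul_eq_mul, hρ]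
  -- the sorted prefix sum equals the active-set sum
  have hT : univ.filter (fun i : Fin K => lam < μs i)
      = univ.filter (fun i : Fin K => (i : ℕ) < ρ) := by
    have hdc : ∀ i j : Fin K, i ≤ j →
        j ∈ univ.filter (fun i : Fin K => lam < μs i) →
        i ∈ univ.filter (fun i : Fin K => lam < μs i) := by
      intro i j hij hj
      simp only [mem_filter, mem_univ, true_and] at hj ⊢
      exact lt_of_lt_of_le hj (hanti hij)
    have hcard : (univ.filter (fun i : Fin K => lam < μs i)).card = ρ := by
      rw [Finset.card_filter]
      have h1 : ∀ i ∈ univ, (if lam < μs i then 1 else 0)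
          = (fun j => if lam < |w j| then 1 else 0) (σ i) := by
        intro i _; rw [hσ i]
      rw [Finset.sum_congr rfl h1, Equiv.sum_comp σ (fun j => if lam < |w j| then 1 else 0),
        ← Finset.card_filter, hρ]
    rw [lowerset_eq _ hdc, hcard]
  have hμsum : ∑ i ∈ univ.filter (fun i : Fin K => (i : ℕ) < ρ), μs i
      = ∑ i ∈ univ.filter (fun j : Fin K => lam < |w j|), |w i| := by
    rw [← hT, Finset.sum_filter]
    have h1 : ∀ i ∈ univ, (if lam < μs i then μs i else 0)
        = (fun j => if lam < |w j| then |w j| else 0) (σ i) := by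
      intro i _; rw [hσ i]
    rw [Finset.sum_congr rfl h1,
      Equiv.sum_comp σ (fun j => if lam < |w j| then |w j| else 0),
      ← Finset.sum_filter]
  have hρne : (ρ : ℝ) ≠ 0 := Nat.cast_ne_zero.mpr hρpos.ne'
  have hlameq : ((∑ i ∈ univ.filter (fun i : Fin K => (i : ℕ) < ρ), μs i) - Z)
      / (ρ : ℝ) = lam := by
    rw [hμsum]
    field_simp
    linarith [hsplit2]
  refine ⟨fun i => ?_, hSl1⟩
  rw [hlameq]
end

section
/- Fix λ > 0 and a finite alphabet 𝒜 ⊂ ℝ, and suppose 𝒜 is a symmetric uniform grid containing Π_λ(t)'s nearest grid point. For a vector c ∈ ℝ^D with c ≠ 0 and scalar t ∈ ℝ, the minimizer over p ∈ 𝒜 of ½‖t·c − p·c‖₂² + λ|p|·‖c‖₂², equivalently argmin_{p ∈ 𝒜} (½(t − p)² + λ|p|), is attained at the element of 𝒜 nearest to the soft-thresholded value Π_λ(t) = sign(t)(|t| − λ)₊. -/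
lemma key_scalar (t lam q p : ℝ) (hlam : 0 < lam)
    (pit : ℝ) (hpit : pit = Real.sign t * max (|t| - lam) 0)
    (hnear : |q - pit| ≤ |p - pit|)
    (h0 : pit = 0 → q = 0) (hposq : 0 < pit → 0 ≤ q) (hnegq : pit < 0 → q ≤ 0) :
    (1/2) * (t - q)^2 + lam * |q| ≤ (1/2) * (t - p)^2 + lam * |p| := by
  have hsq : (q - pit)^2 ≤ (p - pit)^2 := by
    rw [← sq_abs (q - pit), ← sq_abs (p - pit)]
    exact pow_le_pow_left₀ (abs_nonneg _) hnear 2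
  rcases le_or_gt (|t|) lam with hcase | hcase
  · have hp0 : pit = 0 := by
      have : max (|t| - lam) 0 = 0 := max_eq_right (by linarith)
      rw [hpit, this, mul_zero]
    have hq0 : q = 0 := h0 hp0
    subst hq0
    rcases abs_cases p with ⟨h1, h2⟩ | ⟨h1, h2⟩ <;> rcases abs_cases t with ⟨h3, h4⟩ | ⟨h3, h4⟩ <;>
      simp only [abs_zero] <;> nlinarith
  · rcases lt_or_ge t 0 with ht | ht
    · have ht' : t < -lam := by rcases abs_cases t with ⟨h1,_⟩|⟨h1,_⟩ <;> linarith
      have hp : pit = t + lam := by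
        rw [hpit, Real.sign_of_neg (by linarith), abs_of_neg (by linarith),
          max_eq_left (by linarith)]
        ring
      have hq : q ≤ 0 := hnegq (by linarith)
      have habsq : |q| = -q := abs_of_nonpos hq
      rcases le_or_gt p 0 with hpp | hpp
      · rw [habsq, abs_of_nonpos hpp]; nlinarith
      · rw [habsq, abs_of_pos hpp]; nlinarith
    · have ht' : lam < t := by rcases abs_cases t with ⟨h1,_⟩|⟨h1,_⟩ <;> linarith
      have hp : pit = t - lam := by
        rw [hpit, Real.sign_of_pos (by linarith), abs_of_pos (by linarith),
          max_eq_left (by linarith)]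
        ring
      have hq : 0 ≤ q := hposq (by linarith)
      have habsq : |q| = q := abs_of_nonneg hq
      rcases le_or_gt 0 p with hpp | hpp
      · rw [habsq, abs_of_nonneg hpp]; nlinarith
      · rw [habsq, abs_of_neg hpp]; nlinarith

/-- For a symmetric uniform quantization alphabet 𝒜 with step s, λ > 0,
c ≠ 0 and t ∈ ℝ, the minimizer over p ∈ 𝒜 of ½‖t·c − p·c‖₂² + λ|p|·‖c‖₂² is attained
at the nearest-point quantization of the soft-thresholded value Π_λ(t), whenever that
nearest grid point lies in 𝒜 (no clipping needed). -/
theorem stmt7 (b : ℕ) (hb : 1 ≤ b) (s : ℝ) (hs : 0 < s) (lam : ℝ) (hlam : 0 < lam)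
    (D : ℕ) (c : Fin D → ℝ) (hc : c ≠ 0) (t : ℝ)
    (A : Finset ℝ)
    (hA : A = (Finset.Icc (-(2 ^ (b - 1) - 1) : ℤ) (2 ^ (b - 1) - 1)).image
      (fun k : ℤ => (k : ℝ) * s))
    (pit : ℝ) (hpit : pit = Real.sign t * max (|t| - lam) 0)
    (hin : |round (pit / s)| ≤ 2 ^ (b - 1) - 1) :
    ((round (pit / s) : ℝ) * s ∈ A) ∧
    ∀ p ∈ A,
      (1 / 2) * (∑ i, (t * c i - ((round (pit / s) : ℝ) * s) * c i) ^ 2) +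
          lam * |(round (pit / s) : ℝ) * s| * (∑ i, (c i) ^ 2) ≤
        (1 / 2) * (∑ i, (t * c i - p * c i) ^ 2) + lam * |p| * (∑ i, (c i) ^ 2) := by
  set r : ℤ := round (pit / s) with hr
  set q : ℝ := (r : ℝ) * s with hqdef
  constructor
  · rw [hA, Finset.mem_image]
    exact ⟨r, Finset.mem_Icc.mpr ⟨neg_le_of_abs_le hin, le_of_abs_le hin⟩, rfl⟩
  · intro p hpA
    rw [hA, Finset.mem_image] at hpA
    obtain ⟨k, _, hk⟩ := hpA
    -- key scalar facts about q = round(pit/s) * s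
    have hnear : |q - pit| ≤ |p - pit| := by
      have h1 : |pit / s - (r:ℝ)| ≤ |pit / s - (k:ℝ)| := round_le (pit / s) k
      have e2 : q - pit = s * ((r:ℝ) - pit / s) := by
        rw [hqdef]; field_simp
      have e3 : p - pit = s * ((k:ℝ) - pit / s) := by
        rw [← hk]; field_simp
      rw [e2, e3, abs_mul, abs_mul, abs_of_pos hs, abs_sub_comm ((r:ℝ)),
        abs_sub_comm ((k:ℝ))]
      exact mul_le_mul_of_nonneg_left h1 hs.le
    have h0 : pit = 0 → q = 0 := by
      intro h
      have hz : pit / s = 0 := by rw [h, zero_div]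
      simp [hqdef, hr, hz]
    have hposq : 0 < pit → 0 ≤ q := by
      intro h
      have h1 : (0:ℤ) ≤ r := by
        rw [hr, round_eq]
        have hx : (0:ℝ) ≤ pit / s + 1/2 := by positivity
        exact Int.le_floor.mpr (by exact_mod_cast hx)
      have h2 : (0:ℝ) ≤ (r:ℝ) := by exact_mod_cast h1
      exact mul_nonneg h2 hs.le
    have hnegq : pit < 0 → q ≤ 0 := by
      intro h
      have hx : pit / s < 0 := div_neg_of_neg_of_pos h hs
      have h1 : r < 1 := by
        rw [hr, round_eq]
        exact Int.floor_lt.mpr (by push_cast; linarith)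
      have h2 : (r:ℝ) ≤ 0 := by exact_mod_cast Int.lt_add_one_iff.mp h1
      exact mul_nonpos_of_nonpos_of_nonneg h2 hs.le
    have hkey := key_scalar t lam q p hlam pit hpit hnear h0 hposq hnegq
    have hC : (0:ℝ) ≤ ∑ i, (c i)^2 := Finset.sum_nonneg fun i _ => sq_nonneg _
    have hfac : ∀ x : ℝ, (∑ i, (t * c i - x * c i) ^ 2) = (t - x)^2 * ∑ i, (c i)^2 := by
      intro x
      rw [Finset.mul_sum]
      congr 1; ext i; ring
    rw [hfac, hfac]
    nlinarith [mul_le_mul_of_nonneg_right hkey hC]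
end

section
/- Combining the greedy clipping invariant with the accumulator bound: if q ∈ ℤ^K is constructed so that its cumulative positive sum never exceeds B = (2^{P−1} − 1)/(2^N − 1) and its cumulative negative sum never goes below A = −(2^{P−1} − 1)/(2^N − 1), then for every integer vector x with entries in {0, ..., 2^N − 1}, |xᵀq| ≤ 2^{P−1} − 1. -/
/-- If q ∈ ℤ^K is such that its cumulative positive sums never exceed
B = (2^{P−1}−1)/(2^N−1) and its cumulative negative sums never go below −B, then for
every integer activation vector x with entries in {0,...,2^N−1}, |xᵀq| ≤ 2^{P−1}−1. -/
theorem stmt9 (K : ℕ) (q : Fin K → ℤ) (P N : ℕ) (hP : 2 ≤ P) (hN : 1 ≤ N)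
    (hpos : ∀ n : ℕ, n ≤ K →
      ((∑ j ∈ Finset.univ.filter (fun j : Fin K => (j : ℕ) < n ∧ 0 < q j), q j : ℤ) : ℝ)
        ≤ ((2 : ℝ) ^ (P - 1) - 1) / ((2 : ℝ) ^ N - 1))
    (hneg : ∀ n : ℕ, n ≤ K →
      -(((2 : ℝ) ^ (P - 1) - 1) / ((2 : ℝ) ^ N - 1)) ≤
        ((∑ j ∈ Finset.univ.filter (fun j : Fin K => (j : ℕ) < n ∧ q j < 0), q j : ℤ) : ℝ)) :
    ∀ x : Fin K → ℤ, (∀ i, 0 ≤ x i ∧ x i ≤ 2 ^ N - 1) →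
      |∑ i, x i * q i| ≤ 2 ^ (P - 1) - 1 := by
  intro x hx
  have hB : (0:ℝ) < (2:ℝ) ^ N - 1 := by
    have : (2:ℝ) = 2 ^ 1 := (pow_one 2).symm
    have h2 : (2:ℝ) ^ 1 ≤ 2 ^ N := pow_le_pow_right₀ (by norm_num) hN
    linarith
  have hp := hpos K le_rfl
  have hn := hneg K le_rfl
  have hfp : Finset.univ.filter (fun j : Fin K => (j : ℕ) < K ∧ 0 < q j)
      = Finset.univ.filter (fun j : Fin K => 0 < q j) := by
    apply Finset.filter_congr; intro j _; simp [j.isLt]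
  have hfn : Finset.univ.filter (fun j : Fin K => (j : ℕ) < K ∧ q j < 0)
      = Finset.univ.filter (fun j : Fin K => q j < 0) := by
    apply Finset.filter_congr; intro j _; simp [j.isLt]
  rw [hfp] at hp
  rw [hfn] at hn
  set Sp : ℤ := ∑ j ∈ Finset.univ.filter (fun j : Fin K => 0 < q j), q j with hSp
  set Sn : ℤ := ∑ j ∈ Finset.univ.filter (fun j : Fin K => q j < 0), q j with hSn
  -- convert real bounds to integer bounds
  have hpR : (Sp : ℝ) * ((2:ℝ) ^ N - 1) ≤ (2:ℝ) ^ (P - 1) - 1 := (le_div_iff₀ hB).mp hp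
  have hnR : -((2:ℝ) ^ (P - 1) - 1) ≤ (Sn : ℝ) * ((2:ℝ) ^ N - 1) := by
    rw [neg_le] at hn ⊢
    have := (le_div_iff₀ hB).mp (by linarith : (-Sn : ℝ) ≤ ((2:ℝ) ^ (P-1) - 1) / ((2:ℝ)^N - 1))
    linarith
  have hpZ : Sp * (2 ^ N - 1) ≤ 2 ^ (P - 1) - 1 := by exact_mod_cast (by push_cast; linarith : ((Sp * (2 ^ N - 1) : ℤ) : ℝ) ≤ (((2:ℤ) ^ (P - 1) - 1 : ℤ) : ℝ))
  have hnZ : -(2 ^ (P - 1) - 1) ≤ Sn * (2 ^ N - 1) := by exact_mod_cast (by push_cast; linarith : (((-(2 ^ (P - 1) - 1) : ℤ)) : ℝ) ≤ ((Sn * (2 ^ N - 1) : ℤ) : ℝ))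
  rw [abs_le]
  have hsplitp : ∑ i, x i * q i ≤ ∑ j ∈ Finset.univ.filter (fun j : Fin K => 0 < q j), x j * q j := by
    have h := Finset.sum_filter_add_sum_filter_not Finset.univ (fun j : Fin K => 0 < q j) (fun j => x j * q j)
    have h2 : ∑ j ∈ Finset.univ.filter (fun j : Fin K => ¬ 0 < q j), x j * q j ≤ 0 := by
      apply Finset.sum_nonpos
      intro i hi
      simp only [Finset.mem_filter, Finset.mem_univ, true_and, not_lt] at hi
      exact mul_nonpos_of_nonneg_of_nonpos (hx i).1 hi
    linarith
  have hsplitn : ∑ j ∈ Finset.univ.filter (fun j : Fin K => q j < 0), x j * q j ≤ ∑ i, x i * q i := by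
    apply Finset.sum_le_sum_of_subset_of_nonneg (Finset.filter_subset _ _)
    intro i _ hi
    simp only [Finset.mem_filter, Finset.mem_univ, true_and, not_lt] at hi
    exact mul_nonneg (hx i).1 hi
  have hub : ∑ j ∈ Finset.univ.filter (fun j : Fin K => 0 < q j), x j * q j ≤ (2 ^ N - 1) * Sp := by
    rw [hSp, Finset.mul_sum]
    apply Finset.sum_le_sum
    intro i hi
    simp only [Finset.mem_filter, Finset.mem_univ, true_and] at hi
    exact mul_le_mul_of_nonneg_right (hx i).2 hi.le
  have hlb : (2 ^ N - 1) * Sn ≤ ∑ j ∈ Finset.univ.filter (fun j : Fin K => q j < 0), x j * q j := by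
    rw [hSn, Finset.mul_sum]
    apply Finset.sum_le_sum
    intro i hi
    simp only [Finset.mem_filter, Finset.mem_univ, true_and] at hi
    exact mul_le_mul_of_nonpos_right (hx i).2 hi.le
  constructor
  · nlinarith [hlb, hsplitn, hnZ]
  · nlinarith [hub, hsplitp, hpZ]
end

section
/- GPFQ invariance under data replacement: Let GPFQ(W, X, X̃, 𝒜) denote the greedy path-following quantization algorithm whose i-th iteration computes V_i = W_i·⟨X̃_i, X_i⟩/‖X̃_i‖₂² + X̃_i U_{i−1}/‖X̃_i‖₂² with U_{i−1} = Σ_{j<i}(X_jᵀW_j − X̃_jᵀQ_j) and Q_i = Q(V_i). If X̃X̃ᵀ is invertible, H = (X̃X̃ᵀ)^{1/2}, and G = XX̃ᵀ, then GPFQ(W, X, X̃, 𝒜) = GPFQ(W, GH^{−1}, H, 𝒜), i.e., both runs produce identical quantized outputs Q at every step. -/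
/-- GPFQ invariance under data replacement. If Q satisfies the GPFQ
recurrence Q_i = 𝒬(V_i) with V_i = W_i⟨X̃_i, X_i⟩/‖X̃_i‖² + X̃_i U_{i−1}/‖X̃_i‖²,
U_{i−1} = Σ_{j<i}(X_jᵀW_j − X̃_jᵀQ_j), and Q' satisfies the same recurrence with the
data (X, X̃) replaced by (GH^{−1}, H) where H = (X̃X̃ᵀ)^{1/2} and G = XX̃ᵀ, then
Q = Q': both runs produce identical quantized outputs. -/
theorem stmt12 (K C D : ℕ)
    (Qf : (Fin C → ℝ) → (Fin C → ℝ))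
    (W : Fin K → Fin C → ℝ)
    (X Xt : Matrix (Fin K) (Fin D) ℝ)
    (hinv : IsUnit (Xt * Xt.transpose))
    (H : Matrix (Fin K) (Fin K) ℝ) (hsymm : H.IsSymm) (hpd : H.PosDef)
    (hsq : H * H = Xt * Xt.transpose)
    (G : Matrix (Fin K) (Fin K) ℝ) (hG : G = X * Xt.transpose)
    (Q Q' : Fin K → Fin C → ℝ)
    (hQ : ∀ i : Fin K, Q i = Qf (fun c =>
      W i c * (∑ d, Xt i d * X i d) / (∑ d, (Xt i d) ^ 2) +
      (∑ d, Xt i d * (∑ j ∈ Finset.univ.filter (fun j : Fin K => j < i),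
          (X j d * W j c - Xt j d * Q j c))) / (∑ d, (Xt i d) ^ 2)))
    (hQ' : ∀ i : Fin K, Q' i = Qf (fun c =>
      W i c * (∑ k, H i k * (G * H⁻¹) i k) / (∑ k, (H i k) ^ 2) +
      (∑ k, H i k * (∑ j ∈ Finset.univ.filter (fun j : Fin K => j < i),
          ((G * H⁻¹) j k * W j c - H j k * Q' j c))) / (∑ k, (H i k) ^ 2))) :
    Q = Q' := by
  have hHT : H.transpose = H := hsymm
  have hdet : IsUnit H.det := isUnit_iff_ne_zero.mpr (ne_of_gt hpd.det_pos)
  have hHinv : H * H⁻¹ = 1 := Matrix.mul_nonsing_inv H hdet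
  have hHinvT : (H⁻¹).transpose = H⁻¹ := by
    rw [Matrix.transpose_nonsing_inv, hHT]
  have hA : H * (G * H⁻¹).transpose = G.transpose := by
    rw [Matrix.transpose_mul, hHinvT, ← Matrix.mul_assoc, hHinv, Matrix.one_mul]
  have hA' : ∀ i j : Fin K, ∑ k, H i k * (G * H⁻¹) j k = ∑ d, X j d * Xt i d := by
    intro i j
    calc ∑ k, H i k * (G * H⁻¹) j k = (H * (G * H⁻¹).transpose) i j := by
          simp only [Matrix.mul_apply, Matrix.transpose_apply]
      _ = G.transpose i j := by rw [hA]
      _ = ∑ d, X j d * Xt i d := by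
          simp [hG, Matrix.mul_apply, Matrix.transpose_apply]
  have hB : ∀ i j : Fin K, ∑ k, H i k * H j k = ∑ d, Xt i d * Xt j d := by
    intro i j
    calc ∑ k, H i k * H j k = (H * H.transpose) i j := by simp [Matrix.mul_apply]
      _ = (Xt * Xt.transpose) i j := by rw [hHT, hsq]
      _ = ∑ d, Xt i d * Xt j d := by simp [Matrix.mul_apply]
  have key : ∀ n : ℕ, ∀ i : Fin K, i.val < n → Q i = Q' i := by
    intro n
    induction n with
    | zero => intro i hi; omega
    | succ n ih =>
      intro i hi
      have ihj : ∀ j : Fin K, j < i → Q j = Q' j := fun j hj =>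
        ih j (by have : j.val < i.val := hj; omega)
      rw [hQ i, hQ' i]
      refine congrArg Qf (funext fun c => ?_)
      have e1 : ∑ d, Xt i d * X i d = ∑ k, H i k * (G * H⁻¹) i k := by
        rw [hA' i i]
        exact Finset.sum_congr rfl fun d _ => mul_comm _ _
      have e2 : ∑ d, (Xt i d) ^ 2 = ∑ k, (H i k) ^ 2 := by
        simpa [sq] using (hB i i).symm
      have e3 : (∑ d, Xt i d * (∑ j ∈ Finset.univ.filter (fun j : Fin K => j < i),
            (X j d * W j c - Xt j d * Q j c)))
          = ∑ k, H i k * (∑ j ∈ Finset.univ.filter (fun j : Fin K => j < i),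
            ((G * H⁻¹) j k * W j c - H j k * Q' j c)) := by
        have lhs_eq : (∑ d, Xt i d * (∑ j ∈ Finset.univ.filter (fun j : Fin K => j < i),
              (X j d * W j c - Xt j d * Q j c)))
            = ∑ j ∈ Finset.univ.filter (fun j : Fin K => j < i),
              ((∑ d, X j d * Xt i d) * W j c - (∑ d, Xt i d * Xt j d) * Q j c) := by
          calc (∑ d, Xt i d * (∑ j ∈ Finset.univ.filter (fun j : Fin K => j < i),
                  (X j d * W j c - Xt j d * Q j c)))
              = ∑ d, ∑ j ∈ Finset.univ.filter (fun j : Fin K => j < i),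
                  Xt i d * (X j d * W j c - Xt j d * Q j c) :=
                Finset.sum_congr rfl fun d _ => Finset.mul_sum _ _ _
            _ = ∑ j ∈ Finset.univ.filter (fun j : Fin K => j < i),
                  ∑ d, Xt i d * (X j d * W j c - Xt j d * Q j c) := Finset.sum_comm
            _ = _ := by
                refine Finset.sum_congr rfl fun j _ => ?_
                simp only [mul_sub, Finset.sum_sub_distrib, Finset.sum_mul]
                congr 1
                · exact Finset.sum_congr rfl fun d _ => by ring
                · exact Finset.sum_congr rfl fun d _ => by ring
        have rhs_eq : (∑ k, H i k * (∑ j ∈ Finset.univ.filter (fun j : Fin K => j < i),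
              ((G * H⁻¹) j k * W j c - H j k * Q' j c)))
            = ∑ j ∈ Finset.univ.filter (fun j : Fin K => j < i),
              ((∑ k, H i k * (G * H⁻¹) j k) * W j c - (∑ k, H i k * H j k) * Q' j c) := by
          calc (∑ k, H i k * (∑ j ∈ Finset.univ.filter (fun j : Fin K => j < i),
                  ((G * H⁻¹) j k * W j c - H j k * Q' j c)))
              = ∑ k, ∑ j ∈ Finset.univ.filter (fun j : Fin K => j < i),
                  H i k * ((G * H⁻¹) j k * W j c - H j k * Q' j c) :=
                Finset.sum_congr rfl fun k _ => Finset.mul_sum _ _ _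
            _ = ∑ j ∈ Finset.univ.filter (fun j : Fin K => j < i),
                  ∑ k, H i k * ((G * H⁻¹) j k * W j c - H j k * Q' j c) := Finset.sum_comm
            _ = _ := by
                refine Finset.sum_congr rfl fun j _ => ?_
                simp only [mul_sub, Finset.sum_sub_distrib, Finset.sum_mul]
                congr 1
                · exact Finset.sum_congr rfl fun d _ => by ring
                · exact Finset.sum_congr rfl fun d _ => by ring
        rw [lhs_eq, rhs_eq]
        refine Finset.sum_congr rfl fun j hj => ?_
        have hji : j < i := (Finset.mem_filter.mp hj).2
        rw [hA' i j, hB i j, ihj j hji]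
      rw [e1, e2, e3]
  funext i
  exact key K i i.isLt
end

section
/- In the GPFQ reformulation, the quantization error term in the transformed coordinates matches the original: with H = (X̃X̃ᵀ)^{1/2}, G = XX̃ᵀ (X̃X̃ᵀ invertible), and Û_{i−1} = Σ_{j<i}((GH^{−1})_jᵀW_j − H_jᵀQ_j), one has H_i Û_{i−1} = X̃_i (Σ_{j<i}(X_jᵀW_j − X̃_jᵀQ_j)) for every i and every choice of W_j ∈ ℝ^{1×C}, Q_j ∈ ℝ^{1×C}. -/
/-- In the GPFQ reformulation, the quantization-error term in the
transformed coordinates matches the original: with H = (X̃X̃ᵀ)^{1/2} (X̃X̃ᵀ invertible)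
and G = XX̃ᵀ, for Û_{i−1} = Σ_{j<i}((GH^{−1})_jᵀ W_j − H_jᵀ Q_j), one has
H_i Û_{i−1} = X̃_i (Σ_{j<i}(X_jᵀ W_j − X̃_jᵀ Q_j)) for every i, W, Q. -/
theorem stmt13 (K C D : ℕ) (X Xt : Matrix (Fin K) (Fin D) ℝ)
    (hinv : IsUnit (Xt * Xt.transpose))
    (H : Matrix (Fin K) (Fin K) ℝ) (hsymm : H.IsSymm) (hpd : H.PosDef)
    (hsq : H * H = Xt * Xt.transpose)
    (G : Matrix (Fin K) (Fin K) ℝ) (hG : G = X * Xt.transpose) :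
    ∀ (W Q : Fin K → Fin C → ℝ) (i : Fin K) (c : Fin C),
      ∑ k, H i k * (∑ j ∈ Finset.univ.filter (fun j : Fin K => j < i),
          ((G * H⁻¹) j k * W j c - H j k * Q j c)) =
      ∑ d, Xt i d * (∑ j ∈ Finset.univ.filter (fun j : Fin K => j < i),
          (X j d * W j c - Xt j d * Q j c)) := by
  intro W Q i c
  have hdet : IsUnit H.det := isUnit_iff_ne_zero.mpr hpd.det_pos.ne'
  have hGH : (G * H⁻¹) * H = G := by
    rw [Matrix.mul_assoc, Matrix.nonsing_inv_mul H hdet, Matrix.mul_one]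
  have hsym : ∀ a b, H a b = H b a := fun a b => hsymm.apply b a
  simp only [Finset.mul_sum]
  rw [Finset.sum_comm, Finset.sum_comm (s := Finset.univ)]
  apply Finset.sum_congr rfl
  intro j _
  have e1 : ∑ k, H i k * (G * H⁻¹) j k = ∑ d, Xt i d * X j d := by
    have h := congrFun (congrFun hGH j) i
    simp only [Matrix.mul_apply] at h
    calc ∑ k, H i k * (G * H⁻¹) j k
        = ∑ k, (G * H⁻¹) j k * H k i := by
          apply Finset.sum_congr rfl; intro k _; rw [hsym i k]; ring
      _ = G j i := h
      _ = ∑ d, Xt i d * X j d := by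
          simp only [hG, Matrix.mul_apply, Matrix.transpose_apply]
          apply Finset.sum_congr rfl; intro d _; ring
  have e2 : ∑ k, H i k * H j k = ∑ d, Xt i d * Xt j d := by
    have h := congrFun (congrFun hsq j) i
    simp only [Matrix.mul_apply] at h
    calc ∑ k, H i k * H j k
        = ∑ k, H j k * H k i := by
          apply Finset.sum_congr rfl; intro k _; rw [hsym i k]; ring
      _ = ∑ d, Xt i d * Xt j d := by
          rw [h]
          simp only [Matrix.mul_apply, Matrix.transpose_apply]
          apply Finset.sum_congr rfl; intro d _; ring
  calc ∑ k, H i k * ((G * H⁻¹) j k * W j c - H j k * Q j c)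
      = (∑ k, H i k * (G * H⁻¹) j k) * W j c - (∑ k, H i k * H j k) * Q j c := by
        simp only [mul_sub, ← mul_assoc]
        rw [Finset.sum_sub_distrib, ← Finset.sum_mul, ← Finset.sum_mul]
    _ = (∑ d, Xt i d * X j d) * W j c - (∑ d, Xt i d * Xt j d) * Q j c := by
        rw [e1, e2]
    _ = ∑ d, Xt i d * (X j d * W j c - Xt j d * Q j c) := by
        simp only [mul_sub, ← mul_assoc]
        rw [Finset.sum_sub_distrib, ← Finset.sum_mul, ← Finset.sum_mul]
end
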